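/- arXiv:1709.09331 — 3 statements merged into one kernel-verified Lean document; each statement's English description precedes it below -/
import Mathlib

section
/- Let P be a finite poset and e ∈ P. Define η_e := t_{x_1} ∘ t_{x_2} ∘ ⋯ ∘ t_{x_k} where (x_1, …, x_k) is any linear extension of the subposet {x ∈ P | x < e} (this is independent of the choice of linear extension), and define τ_e^* := η_e ∘ t_e ∘ η_e^{-1}. Then for every antichain A ∈ A(P), the order ideal generated by τ_e(A) equals τ_e^*(I(A)). Equivalently, I ∘ τ_e = τ_e^* ∘ I as maps A(P) → J(P). -/
open scoped Classical

variable {P : Type*} [PartialOrder P]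

abbrev OrderIdealSub (P : Type*) [PartialOrder P] : Type _ := {I : Set P // IsLowerSet I}

abbrev AntichainSub (P : Type*) [PartialOrder P] : Type _ := {A : Set P // IsAntichain (· ≤ ·) A}

noncomputable def togFun (e : P) (I : OrderIdealSub P) : OrderIdealSub P :=
  if _h : e ∈ I.1 then
    if h2 : IsLowerSet (I.1 \ {e}) then ⟨I.1 \ {e}, h2⟩ else I
  else
    if h2 : IsLowerSet (insert e I.1) then ⟨insert e I.1, h2⟩ else I

noncomputable def atogFun (e : P) (A : AntichainSub P) : AntichainSub P :=
  if _h : e ∈ A.1 then ⟨A.1 \ {e}, A.2.subset Set.diff_subset⟩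
  else if h2 : IsAntichain (· ≤ ·) (insert e A.1) then ⟨insert e A.1, h2⟩
  else A

def idealOf (A : AntichainSub P) : OrderIdealSub P :=
  ⟨{x | ∃ y ∈ A.1, x ≤ y}, fun _a _b hba ha => by
    obtain ⟨y, hy, h⟩ := ha
    exact ⟨y, hy, hba.trans h⟩⟩

def listComp {α : Type*} (fs : List (α → α)) : α → α := fs.foldr (· ∘ ·) id

theorem togFun_involutive (e : P) : Function.Involutive (togFun (P := P) e) := by
  intro I
  unfold togFun
  by_cases h : e ∈ I.1
  · rw [dif_pos h]
    by_cases h2 : IsLowerSet (I.1 \ {e})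
    · rw [dif_pos h2]
      have hne : e ∉ (⟨I.1 \ {e}, h2⟩ : OrderIdealSub P).1 := fun hc => hc.2 rfl
      rw [dif_neg hne]
      have hins : insert e (I.1 \ {e}) = I.1 := by
        rw [Set.insert_diff_singleton, Set.insert_eq_self.mpr h]
      have h3 : IsLowerSet (insert e ((⟨I.1 \ {e}, h2⟩ : OrderIdealSub P)).1) := by
        show IsLowerSet (insert e (I.1 \ {e})); rw [hins]; exact I.2
      rw [dif_pos h3]
      exact Subtype.ext hins
    · rw [dif_neg h2, dif_pos h, dif_neg h2]
  · rw [dif_neg h]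
    by_cases h2 : IsLowerSet (insert e I.1)
    · rw [dif_pos h2]
      have hme : e ∈ (⟨insert e I.1, h2⟩ : OrderIdealSub P).1 := Set.mem_insert e I.1
      rw [dif_pos hme]
      have hdel : (insert e I.1) \ {e} = I.1 := by
        rw [Set.insert_sdiff_self_of_notMem h]
      have h3 : IsLowerSet ((⟨insert e I.1, h2⟩ : OrderIdealSub P).1 \ {e}) := by
        show IsLowerSet ((insert e I.1) \ {e}); rw [hdel]; exact I.2
      rw [dif_pos h3]
      exact Subtype.ext hdel
    · rw [dif_neg h2, dif_neg h, dif_neg h2]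

theorem atogFun_involutive (e : P) : Function.Involutive (atogFun (P := P) e) := by
  intro A
  unfold atogFun
  by_cases h : e ∈ A.1
  · rw [dif_pos h]
    have hne : e ∉ (⟨A.1 \ {e}, A.2.subset Set.diff_subset⟩ : AntichainSub P).1 :=
      fun hc => hc.2 rfl
    rw [dif_neg hne]
    have hins : insert e (A.1 \ {e}) = A.1 := by
      rw [Set.insert_diff_singleton, Set.insert_eq_self.mpr h]
    have h2 : IsAntichain (· ≤ ·)
        (insert e ((⟨A.1 \ {e}, A.2.subset Set.diff_subset⟩ : AntichainSub P)).1) := by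
      show IsAntichain (· ≤ ·) (insert e (A.1 \ {e})); rw [hins]; exact A.2
    rw [dif_pos h2]
    exact Subtype.ext hins
  · rw [dif_neg h]
    by_cases h2 : IsAntichain (· ≤ ·) (insert e A.1)
    · rw [dif_pos h2]
      have hme : e ∈ (⟨insert e A.1, h2⟩ : AntichainSub P).1 := Set.mem_insert e A.1
      rw [dif_pos hme]
      have hdel : (insert e A.1) \ {e} = A.1 := by
        rw [Set.insert_sdiff_self_of_notMem h]
      exact Subtype.ext hdel
    · rw [dif_neg h2, dif_neg h, dif_neg h2]

noncomputable def togPerm (e : P) : Equiv.Perm (OrderIdealSub P) :=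
  (togFun_involutive e).toPerm _

noncomputable def atogPerm (e : P) : Equiv.Perm (AntichainSub P) :=
  (atogFun_involutive e).toPerm _

def IsLinExtListOn (S : Set P) (l : List P) : Prop :=
  l.Nodup ∧ (∀ x : P, x ∈ l ↔ x ∈ S) ∧
    ∀ i j : Fin l.length, l.get i < l.get j → (i : ℕ) < (j : ℕ)

noncomputable def RowJ (I : OrderIdealSub P) : OrderIdealSub P :=
  ⟨{x | ∃ m, (m ∉ I.1 ∧ ∀ z, z ∉ I.1 → z ≤ m → z = m) ∧ x ≤ m}, fun _a _b hba ha => by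
    obtain ⟨m, hm, h⟩ := ha
    exact ⟨m, hm, hba.trans h⟩⟩

noncomputable def RowA (A : AntichainSub P) : AntichainSub P :=
  ⟨{x | x ∉ (idealOf A).1 ∧ ∀ z, z ∉ (idealOf A).1 → z ≤ x → z = x}, by
    intro a ha b hb hne hab
    exact hne (hb.2 a ha.1 hab)⟩

noncomputable def etaJPerm {P : Type*} [PartialOrder P] (l : List P) :
    Equiv.Perm (OrderIdealSub P) := (l.map togPerm).prod

/-!
If `Q` is a lower set, toggling a minimal element `x` of the complement of `Q` turns the ideal
`(I(A) \ Q) ∪ (Q \ ↑A)`, where `↑A` is the upper set generated by `A`, into the same ideal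
for `insert x Q`. Toggling bottom-up along the linear extension therefore shows that
`η_e⁻¹ (I(A))` is this ideal for `Q = {x | x < e}`; on it, `t_e` adds or removes `e` exactly
when `τ_e` does so on `A`, and the result is the corresponding ideal for `τ_e(A)`.
-/

section Toggle

variable {x y : P} {I : OrderIdealSub P}

theorem togFun_val_of_flip {S : Set P} (hS : IsLowerSet S) (hoff : ∀ z ≠ x, z ∈ S ↔ z ∈ I.1)
    (hx : x ∈ S ↔ x ∉ I.1) : (togFun x I).1 = S := by
  unfold togFun
  by_cases hxI : x ∈ I.1
  · have hset : I.1 \ {x} = S := by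
      ext z
      by_cases hz : z = x <;> simp [hz, hoff, hx, hxI]
    rw [dif_pos hxI, dif_pos (hset ▸ hS)]
    exact hset
  · have hset : insert x I.1 = S := by
      ext z
      by_cases hz : z = x <;> simp [hz, hoff, hx, hxI]
    rw [dif_neg hxI, dif_pos (hset ▸ hS)]
    exact hset

theorem togFun_eq_self_of_lt_mem (hxy : x < y) (hy : y ∈ I.1) : togFun x I = I := by
  have hx : x ∈ I.1 := I.2 hxy.le hy
  have hblocked : ¬IsLowerSet (I.1 \ {x}) := fun h => (h hxy.le ⟨hy, hxy.ne'⟩).2 rfl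
  unfold togFun
  rw [dif_pos hx, dif_neg hblocked]

theorem togFun_eq_self_of_lt_notMem (hyx : y < x) (hy : y ∉ I.1) : togFun x I = I := by
  have hx : x ∉ I.1 := fun h => hy (I.2 hyx.le h)
  have hblocked : ¬IsLowerSet (insert x I.1) := fun h =>
    (h hyx.le (Set.mem_insert x _)).elim hyx.ne hy
  unfold togFun
  rw [dif_neg hx, dif_neg hblocked]

end Toggle

section AntichainToggle

variable {e : P} {A : AntichainSub P}

theorem atogFun_val_of_mem (he : e ∈ A.1) : (atogFun e A).1 = A.1 \ {e} := by
  unfold atogFun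
  rw [dif_pos he]

theorem atogFun_val_of_isAntichain_insert (he : e ∉ A.1)
    (hA : IsAntichain (· ≤ ·) (insert e A.1)) : (atogFun e A).1 = insert e A.1 := by
  unfold atogFun
  rw [dif_neg he, dif_pos hA]

theorem atogFun_of_not_isAntichain_insert (he : e ∉ A.1)
    (hA : ¬IsAntichain (· ≤ ·) (insert e A.1)) : atogFun e A = A := by
  unfold atogFun
  rw [dif_neg he, dif_neg hA]

theorem mem_atogFun_iff_of_ne {a : P} (ha : a ≠ e) : a ∈ (atogFun e A).1 ↔ a ∈ A.1 := by
  unfold atogFun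
  split_ifs <;> simp [ha]

end AntichainToggle

section FlipSet

variable {A Q : Set P} {x e : P}

theorem IsLowerSet.insert_of_forall_lt (hQ : IsLowerSet Q) (hbelow : ∀ y < x, y ∈ Q) :
    IsLowerSet (insert x Q) := by
  rintro z y hyz (rfl | hz)
  · rcases hyz.eq_or_lt with rfl | hlt
    · exact Set.mem_insert y Q
    · exact Set.mem_insert_of_mem z (hbelow y hlt)
  · exact Set.mem_insert_of_mem x (hQ hyz hz)

/-- The ideal `I(A)` after the elements of the lower set `Q` have been toggled bottom-up. -/
def flipSet (A Q : Set P) : Set P :=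
  (↑(lowerClosure A) \ Q) ∪ (Q \ ↑(upperClosure A))

theorem isLowerSet_flipSet (hA : IsAntichain (· ≤ ·) A) (hQ : IsLowerSet Q) :
    IsLowerSet (flipSet A Q) := by
  rintro z y hyz (⟨⟨a, ha, hza⟩, hzQ⟩ | ⟨hzQ, hzU⟩)
  · by_cases hyQ : y ∈ Q
    · refine Or.inr ⟨hyQ, ?_⟩
      rintro ⟨b, hb, hby⟩
      have hba : b = a := hA.eq hb ha (hby.trans (hyz.trans hza))
      subst hba
      exact hzQ (hQ (hza.trans hby) hyQ)
    · exact Or.inl ⟨⟨a, ha, hyz.trans hza⟩, hyQ⟩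
  · exact Or.inr ⟨hQ hyz hzQ, fun hyU => hzU ((upperClosure A).upper hyz hyU)⟩

theorem flipSet_empty : flipSet A ∅ = lowerClosure A := by
  simp [flipSet]

theorem mem_flipSet_insert_iff_of_ne {z : P} (hz : z ≠ x) :
    z ∈ flipSet A (insert x Q) ↔ z ∈ flipSet A Q := by
  simp [flipSet, hz]

theorem flipSet_insert_eq_of_notMem (hxQ : x ∉ Q)
    (hx : x ∈ lowerClosure A ↔ x ∉ upperClosure A) : flipSet A (insert x Q) = flipSet A Q := by
  ext z
  by_cases hz : z = x
  · subst hz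
    simp [flipSet, hxQ, hx]
  · exact mem_flipSet_insert_iff_of_ne hz

theorem togFun_flipSet_insert (hA : IsAntichain (· ≤ ·) A) (hQ : IsLowerSet Q) (hxQ : x ∉ Q)
    (hbelow : ∀ y < x, y ∈ Q) {I : OrderIdealSub P} (hI : I.1 = flipSet A Q) :
    (togFun x I).1 = flipSet A (insert x Q) := by
  have hflip : (x ∈ lowerClosure A ↔ x ∈ upperClosure A) →
      (togFun x I).1 = flipSet A (insert x Q) := fun hx =>
    togFun_val_of_flip (isLowerSet_flipSet hA (hQ.insert_of_forall_lt hbelow))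
      (fun z hz => hI ▸ mem_flipSet_insert_iff_of_ne hz) (by simp [flipSet, hI, hxQ, hx])
  by_cases hL : x ∈ lowerClosure A <;> by_cases hU : x ∈ upperClosure A
  · exact hflip (iff_of_true hL hU)
  · obtain ⟨a, ha, hxa⟩ := id hL
    have hxa' : x < a := hxa.lt_of_ne fun h => hU ⟨a, ha, h.ge⟩
    have haI : a ∈ I.1 := hI ▸ Or.inl ⟨⟨a, ha, le_rfl⟩, fun haQ => hxQ (hQ hxa haQ)⟩
    rw [togFun_eq_self_of_lt_mem hxa' haI, hI,
      flipSet_insert_eq_of_notMem hxQ (iff_of_true hL hU)]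
  · obtain ⟨a, ha, hax⟩ := id hU
    have hax' : a < x := hax.lt_of_ne fun h => hL ⟨a, ha, h.ge⟩
    have haI : a ∉ I.1 := by
      rw [hI]
      rintro (⟨-, haQ⟩ | ⟨-, haU⟩)
      exacts [haQ (hbelow a hax'), haU ⟨a, ha, le_rfl⟩]
    rw [togFun_eq_self_of_lt_notMem hax' haI, hI,
      flipSet_insert_eq_of_notMem hxQ (iff_of_false hL (not_not.mpr hU))]
  · exact hflip (iff_of_false hL hU)

theorem mem_flipSet_Iio_iff_of_ne {B : Set P} (hAB : ∀ a ≠ e, a ∈ A ↔ a ∈ B) {z : P}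
    (hz : z ≠ e) : z ∈ flipSet A (Set.Iio e) ↔ z ∈ flipSet B (Set.Iio e) := by
  by_cases hze : z < e
  · have hne : ∀ a ≤ z, a ≠ e := fun a haz => (haz.trans_lt hze).ne
    simp only [flipSet, Set.mem_union, Set.mem_sdiff, SetLike.mem_coe, mem_lowerClosure,
      mem_upperClosure, Set.mem_Iio, hze]
    grind
  · have hne : ∀ a, z ≤ a → a ≠ e := fun a hza hae => hze ((hae ▸ hza).lt_of_ne hz)
    simp only [flipSet, Set.mem_union, Set.mem_sdiff, SetLike.mem_coe, mem_lowerClosure,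
      mem_upperClosure, Set.mem_Iio, hze]
    grind

theorem togFun_flipSet_Iio (A : AntichainSub P) {I : OrderIdealSub P}
    (hI : I.1 = flipSet A.1 (Set.Iio e)) :
    (togFun e I).1 = flipSet (atogFun e A).1 (Set.Iio e) := by
  have hflip : (e ∈ lowerClosure (atogFun e A).1 ↔ e ∉ lowerClosure A.1) →
      (togFun e I).1 = flipSet (atogFun e A).1 (Set.Iio e) := fun he =>
    togFun_val_of_flip (isLowerSet_flipSet (atogFun e A).2 (isLowerSet_Iio e))
      (fun z hz => hI ▸ mem_flipSet_Iio_iff_of_ne (fun a ha => mem_atogFun_iff_of_ne ha) hz)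
      (by simp [flipSet, hI, he])
  by_cases he : e ∈ A.1
  · refine hflip (iff_of_false ?_ (not_not.mpr ⟨e, he, le_rfl⟩))
    rw [atogFun_val_of_mem he]
    rintro ⟨a, ⟨ha, hae⟩, hea⟩
    exact hae (A.2.eq he ha hea).symm
  by_cases hins : IsAntichain (· ≤ ·) (insert e A.1)
  · refine hflip (iff_of_true ?_ ?_)
    · rw [atogFun_val_of_isAntichain_insert he hins]
      exact ⟨e, Set.mem_insert e _, le_rfl⟩
    · rintro ⟨a, ha, hea⟩
      exact he (hins.eq (Set.mem_insert e _) (Set.mem_insert_of_mem e ha) hea ▸ ha)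
  rw [atogFun_of_not_isAntichain_insert he hins]
  obtain ⟨a, ha, hea, hcmp⟩ : ∃ a ∈ A.1, e ≠ a ∧ (e ≤ a ∨ a ≤ e) := by
    simpa [isAntichain_insert, A.2, or_iff_not_imp_left] using hins
  rcases hcmp with hea' | hae
  · have hlt : e < a := hea'.lt_of_ne hea
    have haI : a ∈ I.1 := hI ▸ Or.inl ⟨⟨a, ha, le_rfl⟩, lt_asymm hlt⟩
    rw [togFun_eq_self_of_lt_mem hlt haI, hI]
  · have hlt : a < e := hae.lt_of_ne hea.symm
    have haI : a ∉ I.1 := by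
      rw [hI]
      rintro (⟨-, haS⟩ | ⟨-, haU⟩)
      exacts [haS hlt, haU ⟨a, ha, le_rfl⟩]
    rw [togFun_eq_self_of_lt_notMem hlt haI, hI]

end FlipSet

theorem IsLinExtListOn.pairwise_not_le {S : Set P} {l : List P} (hl : IsLinExtListOn S l) :
    l.Pairwise (fun a b => ¬b ≤ a) := by
  rw [List.pairwise_iff_get]
  intro i j hij hji
  rcases hji.eq_or_lt with h | h
  · exact hij.ne (hl.1.get_inj_iff.1 h).symm
  · exact (hl.2.2 j i h).not_gt hij

theorem etaJPerm_flipSet {A : Set P} (hA : IsAntichain (· ≤ ·) A) {l : List P}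
    (hl : l.Pairwise (fun a b => ¬b ≤ a)) {Q : Set P} (hQ : IsLowerSet Q)
    (hQl : IsLowerSet (Q ∪ {x | x ∈ l})) (hdisj : ∀ x ∈ l, x ∉ Q) {I : OrderIdealSub P}
    (hI : I.1 = flipSet A (Q ∪ {x | x ∈ l})) : (etaJPerm l I).1 = flipSet A Q := by
  induction l generalizing Q I with
  | nil => simpa [etaJPerm] using hI
  | cons x t ih =>
    obtain ⟨hxt, ht⟩ := List.pairwise_cons.1 hl
    have hset : Q ∪ {y | y ∈ x :: t} = insert x Q ∪ {y | y ∈ t} := by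
      ext
      simp [or_left_comm, or_assoc]
    have hxQ : x ∉ Q := hdisj x List.mem_cons_self
    have hbelow : ∀ y < x, y ∈ Q := fun y hyx =>
      (hQl hyx.le (Or.inr List.mem_cons_self)).resolve_right fun hy =>
        (List.mem_cons.1 hy).elim hyx.ne fun hyt => hxt y hyt hyx.le
    have hrest : (etaJPerm t I).1 = flipSet A (insert x Q) :=
      ih ht (hQ.insert_of_forall_lt hbelow) (hset ▸ hQl)
        (fun z hz hzQ => (Set.mem_insert_iff.1 hzQ).elim (fun h => hxt z hz h.le)
          (hdisj z (List.mem_cons_of_mem x hz)))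
        (hI.trans (congrArg _ hset))
    have hK : etaJPerm t I = togFun x ⟨flipSet A Q, isLowerSet_flipSet hA hQ⟩ :=
      Subtype.ext (hrest.trans (togFun_flipSet_insert hA hQ hxQ hbelow rfl).symm)
    show (togFun x (etaJPerm t I)).1 = _
    rw [hK, togFun_involutive]

theorem ideal_of_atoggle_eq_tauStar_ideal_general
    (P : Type*) [PartialOrder P] (e : P) (l : List P)
    (hl : IsLinExtListOn {x : P | x < e} l) (A : AntichainSub P) :
    idealOf (atogFun e A)
      = (etaJPerm l * togPerm e * (etaJPerm l)⁻¹) (idealOf A) := by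
  have hset : (∅ : Set P) ∪ {x | x ∈ l} = Set.Iio e := by
    ext
    simp [hl.2.1]
  have heta (B : AntichainSub P) (I : OrderIdealSub P) (hI : I.1 = flipSet B.1 (Set.Iio e)) :
      etaJPerm l I = idealOf B :=
    Subtype.ext <| (etaJPerm_flipSet B.2 hl.pairwise_not_le isLowerSet_empty
      (hset ▸ isLowerSet_Iio e) (by simp) (hI.trans (congrArg _ hset.symm))).trans flipSet_empty
  let K : OrderIdealSub P := ⟨flipSet A.1 (Set.Iio e), isLowerSet_flipSet A.2 (isLowerSet_Iio e)⟩
  have hK : (etaJPerm l)⁻¹ (idealOf A) = K := (Equiv.symm_apply_eq _).2 (heta A K rfl).symm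
  rw [Equiv.Perm.mul_apply, Equiv.Perm.mul_apply, hK]
  exact (heta _ _ (togFun_flipSet_Iio A rfl)).symm

/-- With `η_e` the composition of the order ideal toggles over a linear extension of
`{x ∈ P | x < e}` and `τ_e^* = η_e t_e η_e⁻¹`, the order ideal generated by `τ_e(A)`
equals `τ_e^*` applied to the order ideal generated by `A`; i.e. `I ∘ τ_e = τ_e^* ∘ I`. -/
theorem ideal_of_atoggle_eq_tauStar_ideal
    (P : Type*) [PartialOrder P] [Fintype P] (e : P) (l : List P)
    (hl : IsLinExtListOn {x : P | x < e} l) (A : AntichainSub P) :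
    idealOf (atogFun e A)
      = (etaJPerm l * togPerm e * (etaJPerm l)⁻¹) (idealOf A) :=
  ideal_of_atoggle_eq_tauStar_ideal_general P e l hl A
end

section
/- Let P be a finite poset and let e_1, …, e_k be pairwise incomparable elements of P. Then for every 1 ≤ i ≤ k, τ_{e_1}^* ∘ τ_{e_2}^* ∘ ⋯ ∘ τ_{e_i}^* = η_{{e_1,…,e_i}} ∘ t_{e_1} ∘ t_{e_2} ∘ ⋯ ∘ t_{e_i} ∘ η_{{e_1,…,e_i}}^{-1}, where for S ⊆ P, η_S := t_{x_1} ∘ ⋯ ∘ t_{x_m} for (x_1, …, x_m) any linear extension of the subposet {x ∈ P | x < y for some y ∈ S}, and τ_e^* := η_{{e}} ∘ t_e ∘ η_{{e}}^{-1}. -/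
/-!
Let `D = {x | x < e_j for some j}`. For each `e = e_i`, a linear extension of `D` can be chosen to
list `{x | x < e}` first, and every remaining element of `D` is incomparable with `e` (an element
above `e` would put `e` below some `e_j`), so its toggle commutes with `t_e`. Hence
`τ_e^* = η_D t_e η_D⁻¹` for every `i`, and the product of conjugates by the common `η_D` is the
conjugate of the product. Throughout, `η_S` does not depend on the linear extension: two linear
extensions differ by swapping incomparable elements, whose toggles commute.
-/

open scoped Classical

variable {P : Type*} [PartialOrder P]

def Togglable (x : P) (I : OrderIdealSub P) : Prop :=
  (x ∈ I.1 ∧ ∀ z ∈ I.1, ¬ x < z) ∨ (x ∉ I.1 ∧ ∀ w < x, w ∈ I.1)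

lemma isLowerSet_diff_singleton_iff {s : Set P} (hs : IsLowerSet s) (x : P) :
    IsLowerSet (s \ {x}) ↔ ∀ z ∈ s, ¬ x < z := by
  refine ⟨fun h z hz hxz => (h hxz.le ⟨hz, hxz.ne'⟩).2 rfl, fun h a b hba hb => ?_⟩
  refine ⟨hs hba hb.1, fun hbx => ?_⟩
  rw [Set.mem_singleton_iff] at hbx
  subst hbx
  exact h a hb.1 (hba.lt_of_ne fun hab => hb.2 hab.symm)

lemma isLowerSet_insert_iff {s : Set P} (hs : IsLowerSet s) (x : P) :
    IsLowerSet (insert x s) ↔ ∀ w < x, w ∈ s := by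
  refine ⟨fun h w hw => (h hw.le (Set.mem_insert x s)).resolve_left hw.ne, ?_⟩
  rintro h a b hba (rfl | hb)
  · rcases hba.lt_or_eq with hlt | rfl
    · exact Set.mem_insert_of_mem _ (h b hlt)
    · exact Set.mem_insert _ _
  · exact Set.mem_insert_of_mem _ (hs hba hb)

lemma coe_togFun (x : P) (I : OrderIdealSub P) :
    (togFun x I).1 = symmDiff I.1 (if Togglable x I then {x} else ∅) := by
  unfold togFun Togglable
  by_cases hx : x ∈ I.1
  · rw [dif_pos hx]
    simp only [isLowerSet_diff_singleton_iff I.2, hx, true_and, not_true_eq_false,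
      false_and, or_false]
    split_ifs <;> ext z <;> by_cases hz : z = x <;> simp [Set.mem_symmDiff, hz, hx]
  · rw [dif_neg hx]
    simp only [isLowerSet_insert_iff I.2, hx, false_and, not_false_eq_true,
      true_and, false_or]
    split_ifs <;> ext z <;> by_cases hz : z = x <;> simp [Set.mem_symmDiff, hz, hx]

lemma mem_togFun_of_ne {x z : P} (hzx : z ≠ x) (I : OrderIdealSub P) :
    z ∈ (togFun x I).1 ↔ z ∈ I.1 := by
  rw [coe_togFun]
  split_ifs <;> simp [Set.mem_symmDiff, hzx]

lemma togglable_togFun_iff {x y : P} (hne : x ≠ y) (hxy : ¬ x < y) (hyx : ¬ y < x)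
    (I : OrderIdealSub P) : Togglable x (togFun y I) ↔ Togglable x I := by
  have hmem : ∀ z, z = x ∨ x < z ∨ z < x → (z ∈ (togFun y I).1 ↔ z ∈ I.1) := by
    intro z hz
    refine mem_togFun_of_ne ?_ I
    rintro rfl
    tauto
  unfold Togglable
  grind

lemma togFun_comm {x y : P} (hne : x ≠ y) (hxy : ¬ x < y) (hyx : ¬ y < x)
    (I : OrderIdealSub P) : togFun x (togFun y I) = togFun y (togFun x I) := by
  apply Subtype.ext
  simp only [coe_togFun, togglable_togFun_iff hne hxy hyx, togglable_togFun_iff hne.symm hyx hxy]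
  rw [symmDiff_assoc, symmDiff_assoc, symmDiff_comm (if Togglable y I then ({y} : Set P) else ∅)]

lemma togPerm_commute {x y : P} (hxy : ¬ x < y) (hyx : ¬ y < x) :
    Commute (togPerm x) (togPerm y) := by
  obtain rfl | hne := eq_or_ne x y
  · exact Commute.refl _
  · exact Equiv.ext (togFun_comm hne hxy hyx)

lemma etaJPerm_cons (a : P) (l : List P) : etaJPerm (a :: l) = togPerm a * etaJPerm l :=
  List.prod_cons

lemma etaJPerm_append (l₁ l₂ : List P) : etaJPerm (l₁ ++ l₂) = etaJPerm l₁ * etaJPerm l₂ := by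
  simp [etaJPerm]

lemma commute_etaJPerm {g : Equiv.Perm (OrderIdealSub P)} {l : List P}
    (h : ∀ x ∈ l, Commute g (togPerm x)) : Commute g (etaJPerm l) :=
  Commute.list_prod_right _ _ (by simpa using h)

lemma IsLinExtListOn.pairwise {S : Set P} {l : List P} (h : IsLinExtListOn S l) :
    l.Pairwise fun a b => ¬ b < a :=
  List.pairwise_iff_get.mpr fun i j hij hji => lt_asymm hij (h.2.2 j i hji)

/-- The first entry of `l` is incomparable with everything `l'` places before it, so its toggle
moves to the front. -/
theorem etaJPerm_eq_of_perm {l l' : List P} (hp : l.Perm l') (hl : l.Pairwise fun a b => ¬ b < a)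
    (hl' : l'.Pairwise fun a b => ¬ b < a) : etaJPerm l = etaJPerm l' := by
  induction l generalizing l' with
  | nil => rw [List.nil_perm.mp hp]
  | cons a t ih =>
    obtain ⟨u, v, rfl⟩ := List.append_of_mem (hp.subset List.mem_cons_self)
    have ht : t.Perm (u ++ v) := (hp.trans List.perm_middle).cons_inv
    have hu : Commute (togPerm a) (etaJPerm u) := by
      refine commute_etaJPerm fun x hx => togPerm_commute ?_ ?_
      · exact (List.pairwise_append.mp hl').2.2 x hx a List.mem_cons_self
      · exact List.rel_of_pairwise_cons hl (ht.mem_iff.mpr (List.mem_append_left v hx))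
    have huv : (u ++ v).Pairwise fun a b => ¬ b < a :=
      hl'.sublist ((List.sublist_cons_self a v).append_left u)
    rw [etaJPerm_cons, ih ht hl.of_cons huv, etaJPerm_append, etaJPerm_append, etaJPerm_cons,
      ← mul_assoc, hu.eq, mul_assoc]

/-- `L` may be taken to list `{x | x < e}` first; the toggles of the remaining elements of `D`
commute with `t_e` and cancel in the conjugate. -/
theorem conj_etaJPerm_togPerm_eq {e : P} {D : Set P} {l L : List P}
    (hl : IsLinExtListOn {x | x < e} l) (hL : IsLinExtListOn D L) (hlD : ∀ x < e, x ∈ D)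
    (heD : ∀ x ∈ D, ¬ e < x) :
    etaJPerm l * togPerm e * (etaJPerm l)⁻¹ = etaJPerm L * togPerm e * (etaJPerm L)⁻¹ := by
  set R := L.filter fun x => ¬ x < e
  have hR : ∀ x, x ∈ R ↔ x ∈ D ∧ ¬ x < e := fun x => by simp [R, List.mem_filter, hL.2.1 x]
  have hperm : L.Perm (l ++ R) := by
    refine (List.perm_ext_iff_of_nodup hL.1 ?_).mpr fun x => ?_
    · refine List.nodup_append.mpr ⟨hl.1, hL.1.filter _, ?_⟩
      rintro x hxl _ hxR rfl
      exact ((hR x).mp hxR).2 ((hl.2.1 x).mp hxl)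
    · rw [List.mem_append, hR, hL.2.1, hl.2.1]
      by_cases hx : x < e <;> simp [hx, hlD]
  have hsplit : etaJPerm L = etaJPerm l * etaJPerm R := by
    rw [← etaJPerm_append]
    refine etaJPerm_eq_of_perm hperm hL.pairwise
      (List.pairwise_append.mpr ⟨hl.pairwise, hL.pairwise.filter _, ?_⟩)
    intro a ha b hb hba
    exact ((hR b).mp hb).2 (hba.trans ((hl.2.1 a).mp ha))
  have hcomm : Commute (togPerm e) (etaJPerm R) :=
    commute_etaJPerm fun x hx => togPerm_commute (heD x ((hR x).mp hx).1) ((hR x).mp hx).2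
  rw [hsplit, mul_assoc (etaJPerm l) (etaJPerm R), ← hcomm.eq]
  group

theorem tauStar_prod_eq_conj_general
    (P : Type*) [PartialOrder P] (es : List P)
    (hpair : es.Pairwise fun x y => ¬ x ≤ y ∧ ¬ y ≤ x)
    (lext : P → List P) (hlext : ∀ e ∈ es, IsLinExtListOn {x : P | x < e} (lext e))
    (L : List P) (hL : IsLinExtListOn {x : P | ∃ y ∈ es, x < y} L) :
    (es.map fun e => etaJPerm (lext e) * togPerm e * (etaJPerm (lext e))⁻¹).prod
      = etaJPerm L * (es.map togPerm).prod * (etaJPerm L)⁻¹ := by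
  have : Std.Symm fun x y : P => ¬ x ≤ y ∧ ¬ y ≤ x := ⟨fun _ _ h => h.symm⟩
  have hconj : ∀ e ∈ es, etaJPerm (lext e) * togPerm e * (etaJPerm (lext e))⁻¹
      = MulAut.conj (etaJPerm L) (togPerm e) := by
    intro e he
    refine conj_etaJPerm_togPerm_eq (hlext e he) hL (fun x hx => ⟨e, he, hx⟩) ?_
    rintro x ⟨y, hy, hxy⟩ hex
    have hey := hex.trans hxy
    exact (hpair.forall he hy hey.ne).1 hey.le
  rw [List.map_congr_left hconj, ← MulAut.conj_apply, map_list_prod, List.map_map]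
  rfl

/-- For pairwise incomparable `e_1, …, e_i`,
`τ_{e_1}^* ⋯ τ_{e_i}^* = η_{{e_1,…,e_i}} t_{e_1} ⋯ t_{e_i} η_{{e_1,…,e_i}}⁻¹`. -/
theorem tauStar_prod_eq_conj
    (P : Type*) [PartialOrder P] [Fintype P] (es : List P)
    (hpair : es.Pairwise fun x y => ¬ x ≤ y ∧ ¬ y ≤ x)
    (lext : P → List P) (hlext : ∀ e ∈ es, IsLinExtListOn {x : P | x < e} (lext e))
    (L : List P) (hL : IsLinExtListOn {x : P | ∃ y ∈ es, x < y} L) :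
    (es.map fun e => etaJPerm (lext e) * togPerm e * (etaJPerm (lext e))⁻¹).prod
      = etaJPerm L * (es.map togPerm).prod * (etaJPerm L)⁻¹ :=
  tauStar_prod_eq_conj_general P es hpair lext hlext L hL
end

section
/- Let P be a finite graded poset of rank r. Then Row_J = t_{rk=0} ∘ t_{rk=1} ∘ ⋯ ∘ t_{rk=r} and Row_A = τ_{rk=r} ∘ ⋯ ∘ τ_{rk=1} ∘ τ_{rk=0}, where compositions are applied right to left. -/
open scoped Classical

variable {P : Type*} [PartialOrder P]

/-!
Toggling the elements of `P` along a linear extension, from the top down, computes `Row_J`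
(Cameron–Fon-der-Flaass): when `x` is toggled, the elements above `x` already have their
membership in `Row_J I` and those below `x` still have their membership in `I`, and the toggle
then puts `x` in exactly when `Row_J` does. Dually, toggling from the bottom up computes `Row_A`.
The rank levels, listed in increasing rank, form a linear extension because the rank function
is strictly monotone.
-/

section ListComp

variable {α β γ : Type*}

lemma listComp_cons (f : α → α) (fs : List (α → α)) : listComp (f :: fs) = f ∘ listComp fs :=
  rfl

lemma listComp_append (fs gs : List (α → α)) :
    listComp (fs ++ gs) = listComp fs ∘ listComp gs := by
  induction fs with
  | nil => rfl
  | cons f fs ih => rw [List.cons_append, listComp_cons, listComp_cons, ih, Function.comp_assoc]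

lemma listComp_map_listComp (f : β → α → α) (L : γ → List β) (ns : List γ) :
    listComp (ns.map fun i => listComp ((L i).map f)) = listComp ((ns.flatMap L).map f) := by
  induction ns with
  | nil => rfl
  | cons i ns ih =>
    rw [List.map_cons, listComp_cons, ih, List.flatMap_cons, List.map_append, listComp_append]

end ListComp

section Toggles

variable {x y : P}

lemma mem_togFun_of_ne_s8 (hne : y ≠ x) (J : OrderIdealSub P) :
    y ∈ (togFun x J).1 ↔ y ∈ J.1 := by
  unfold togFun
  split_ifs <;> simp [hne]

lemma mem_togFun_self_iff (J : OrderIdealSub P) :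
    x ∈ (togFun x J).1 ↔ (∃ y, x < y ∧ y ∈ J.1) ∨ (x ∉ J.1 ∧ ∀ z, z < x → z ∈ J.1) := by
  have lower_diff : IsLowerSet (J.1 \ {x}) ↔ ∀ y, x < y → y ∉ J.1 := by
    refine ⟨fun h y hxy hyJ => (h hxy.le ⟨hyJ, hxy.ne'⟩).2 rfl,
      fun h a b hba ha => ⟨J.2 hba ha.1, ?_⟩⟩
    rintro rfl
    exact h a (hba.lt_of_ne fun hab => ha.2 hab.symm) ha.1
  have lower_insert : IsLowerSet (insert x J.1) ↔ ∀ z, z < x → z ∈ J.1 := by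
    refine ⟨fun h z hzx => (h hzx.le (Set.mem_insert x _)).resolve_left hzx.ne, ?_⟩
    rintro h a b hba (rfl | ha)
    · exact hba.eq_or_lt.imp id (h b)
    · exact Or.inr (J.2 hba ha)
  unfold togFun
  by_cases hxJ : x ∈ J.1
  · simp only [dif_pos hxJ]
    split_ifs with hdiff
    · simpa [hxJ] using lower_diff.1 hdiff
    · simpa [hxJ] using lower_diff.not.1 hdiff
  · simp only [dif_neg hxJ]
    split_ifs with hins
    · simp only [Set.mem_insert_iff, true_or, true_iff]
      exact Or.inr ⟨hxJ, lower_insert.1 hins⟩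
    · simp only [hxJ, not_false_eq_true, true_and, false_iff, not_or, not_exists, not_and]
      exact ⟨fun y hxy hyJ => hxJ (J.2 hxy.le hyJ), lower_insert.not.1 hins⟩

lemma mem_atogFun_of_ne (hne : y ≠ x) (B : AntichainSub P) :
    y ∈ (atogFun x B).1 ↔ y ∈ B.1 := by
  unfold atogFun
  split_ifs <;> simp [hne]

lemma mem_atogFun_self_iff (B : AntichainSub P) :
    x ∈ (atogFun x B).1 ↔ x ∉ B.1 ∧ (∀ y, x < y → y ∉ B.1) ∧ ∀ y, y < x → y ∉ B.1 := by
  by_cases hxB : x ∈ B.1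
  · simp [atogFun, hxB]
  have antichain_insert : IsAntichain (· ≤ ·) (insert x B.1) ↔
      (∀ y, x < y → y ∉ B.1) ∧ ∀ y, y < x → y ∉ B.1 := by
    simp only [isAntichain_insert, B.2, true_and]
    refine ⟨fun h => ⟨fun y hxy hy => (h hy hxy.ne).1 hxy.le,
      fun y hyx hy => (h hy hyx.ne').2 hyx.le⟩, ?_⟩
    rintro ⟨habove, hbelow⟩ y hy hne
    exact ⟨fun hxy => habove y (hxy.lt_of_ne hne) hy,
      fun hyx => hbelow y (hyx.lt_of_ne hne.symm) hy⟩
  unfold atogFun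
  rw [dif_neg hxB]
  split_ifs with hins
  · simpa [hxB] using antichain_insert.1 hins
  · simpa [hxB] using antichain_insert.not.1 hins

end Toggles

section Rowmotion

variable {x : P}

lemma mem_RowJ_iff (I : OrderIdealSub P) :
    x ∈ (RowJ I).1 ↔ (∃ y, x < y ∧ y ∈ (RowJ I).1) ∨ (x ∉ I.1 ∧ ∀ z, z < x → z ∈ I.1) := by
  constructor
  · rintro ⟨m, ⟨hmI, hmin⟩, hxm⟩
    obtain rfl | hxm := hxm.eq_or_lt
    · exact Or.inr ⟨hmI, fun z hzx => by_contra fun hzI => hzx.ne (hmin z hzI hzx.le)⟩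
    · exact Or.inl ⟨m, hxm, m, ⟨hmI, hmin⟩, le_rfl⟩
  · rintro (⟨y, hxy, hy⟩ | ⟨hxI, hbelow⟩)
    · exact (RowJ I).2 hxy.le hy
    · exact ⟨x, ⟨hxI, fun z hzI hzx => hzx.eq_or_lt.resolve_right fun h => hzI (hbelow z h)⟩,
        le_rfl⟩

lemma notMem_idealOf_iff (A : AntichainSub P) :
    x ∉ (idealOf A).1 ↔ x ∉ A.1 ∧ ∀ y, x < y → y ∉ A.1 := by
  simp only [idealOf, Set.mem_ofPred_eq, not_exists, not_and, le_iff_eq_or_lt, not_or]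
  exact ⟨fun h => ⟨fun hx => (h x hx).1 rfl, fun y hxy hy => (h y hy).2 hxy⟩,
    fun ⟨hx, habove⟩ y hy => ⟨by rintro rfl; exact hx hy, fun hxy => habove y hxy hy⟩⟩

lemma mem_RowA_iff [WellFoundedLT P] (A : AntichainSub P) :
    x ∈ (RowA A).1 ↔ x ∉ A.1 ∧ (∀ y, x < y → y ∉ A.1) ∧ ∀ y, y < x → y ∉ (RowA A).1 := by
  change (x ∉ (idealOf A).1 ∧ _) ↔ _
  rw [notMem_idealOf_iff, and_assoc]
  refine and_congr_right fun _ => and_congr_right fun _ => ⟨?_, ?_⟩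
  · exact fun hmin y hyx hy => hyx.ne (hmin y hy.1 hyx.le)
  · intro hbelow z hz hzx
    by_contra hne
    obtain ⟨m, hmz, hm⟩ := exists_minimal_le_of_wellFoundedLT (· ∉ (idealOf A).1) z hz
    exact hbelow m (hmz.trans_lt (hzx.lt_of_ne hne))
      ⟨hm.1, fun w hw hwm => hwm.antisymm (hm.2 hw hwm)⟩

lemma mem_listComp_togFun (I : OrderIdealSub P) {l : List P}
    (hl : l.Pairwise fun a b => ¬ b ≤ a) (hup : ∀ a ∈ l, ∀ b, a ≤ b → b ∈ l) (y : P) :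
    y ∈ (listComp (l.map togFun) I).1 ↔ if y ∈ l then y ∈ (RowJ I).1 else y ∈ I.1 := by
  induction l generalizing y with
  | nil => rfl
  | cons x q ih =>
    obtain ⟨hx, hq⟩ := List.pairwise_cons.1 hl
    have hup_q : ∀ a ∈ q, ∀ b, a ≤ b → b ∈ q := fun a ha b hab =>
      (List.mem_cons.1 (hup a (.tail x ha) b hab)).resolve_left (by rintro rfl; exact hx a ha hab)
    set J := listComp (q.map togFun) I
    have hJ := ih hq hup_q
    rw [List.map_cons, listComp_cons, Function.comp_apply]
    by_cases hyx : y = x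
    · subst hyx
      have above : ∀ z, y < z → (z ∈ J.1 ↔ z ∈ (RowJ I).1) := fun z hyz => by
        rw [hJ, if_pos ((List.mem_cons.1 (hup y List.mem_cons_self z hyz.le)).resolve_left hyz.ne')]
      have below : ∀ z, z ≤ y → (z ∈ J.1 ↔ z ∈ I.1) := fun z hzy => by
        rw [hJ, if_neg fun hz => hx z hz hzy]
      rw [if_pos List.mem_cons_self, mem_togFun_self_iff, mem_RowJ_iff]
      exact or_congr (exists_congr fun z => and_congr_right (above z))
        (and_congr (not_congr (below y le_rfl))
          (forall_congr' fun z => imp_congr_right fun hzy => below z hzy.le))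
    · rw [mem_togFun_of_ne_s8 hyx, hJ]
      simp only [List.mem_cons, hyx, false_or]

-- `hl` makes `l` a repetition-free linear extension; `listComp` applies the last toggle first.
theorem RowJ_eq_listComp_togFun {l : List P} (hl : l.Pairwise fun a b => ¬ b ≤ a)
    (hmem : ∀ x, x ∈ l) : RowJ = listComp (l.map togFun) := by
  funext I
  ext y
  rw [mem_listComp_togFun I hl (fun _ _ b _ => hmem b), if_pos (hmem y)]

lemma mem_listComp_atogFun [WellFoundedLT P] (A : AntichainSub P) {l : List P}
    (hl : l.Pairwise fun a b => ¬ a ≤ b) (hdown : ∀ a ∈ l, ∀ b, b ≤ a → b ∈ l) (y : P) :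
    y ∈ (listComp (l.map atogFun) A).1 ↔ if y ∈ l then y ∈ (RowA A).1 else y ∈ A.1 := by
  induction l generalizing y with
  | nil => rfl
  | cons x q ih =>
    obtain ⟨hx, hq⟩ := List.pairwise_cons.1 hl
    have hdown_q : ∀ a ∈ q, ∀ b, b ≤ a → b ∈ q := fun a ha b hba =>
      (List.mem_cons.1 (hdown a (.tail x ha) b hba)).resolve_left (by rintro rfl; exact hx a ha hba)
    set B := listComp (q.map atogFun) A
    have hB := ih hq hdown_q
    rw [List.map_cons, listComp_cons, Function.comp_apply]
    by_cases hyx : y = x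
    · subst hyx
      have below : ∀ z, z < y → (z ∈ B.1 ↔ z ∈ (RowA A).1) := fun z hzy => by
        rw [hB, if_pos ((List.mem_cons.1 (hdown y List.mem_cons_self z hzy.le)).resolve_left
          hzy.ne)]
      have above : ∀ z, y ≤ z → (z ∈ B.1 ↔ z ∈ A.1) := fun z hyz => by
        rw [hB, if_neg fun hz => hx z hz hyz]
      rw [if_pos List.mem_cons_self, mem_atogFun_self_iff, mem_RowA_iff]
      exact and_congr (not_congr (above y le_rfl))
        (and_congr (forall_congr' fun z => imp_congr_right fun hyz => not_congr (above z hyz.le))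
          (forall_congr' fun z => imp_congr_right fun hzy => not_congr (below z hzy)))
    · rw [mem_atogFun_of_ne hyx, hB]
      simp only [List.mem_cons, hyx, false_or]

theorem RowA_eq_listComp_atogFun [WellFoundedLT P] {l : List P}
    (hl : l.Pairwise fun a b => ¬ a ≤ b) (hmem : ∀ x, x ∈ l) : RowA = listComp (l.map atogFun) := by
  funext A
  ext y
  rw [mem_listComp_atogFun A hl (fun _ _ b _ => hmem b), if_pos (hmem y)]

end Rowmotion

section RankLevels

variable {α : Type*} {rk : α → ℕ} {L : ℕ → List α}

lemma mem_flatMap_rankLevels (hL : ∀ i, ∀ x, x ∈ L i ↔ rk x = i) {ns : List ℕ} {x : α} :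
    x ∈ ns.flatMap L ↔ rk x ∈ ns := by
  simp [List.mem_flatMap, hL]

lemma pairwise_flatMap_rankLevels {R : ℕ → ℕ → Prop} (hR : ∀ i, R i i)
    (hL : ∀ i, (L i).Nodup ∧ ∀ x, x ∈ L i ↔ rk x = i) {ns : List ℕ}
    (hns : ns.Pairwise fun i j => i ≠ j ∧ R i j) :
    (ns.flatMap L).Pairwise fun a b => a ≠ b ∧ R (rk a) (rk b) := by
  refine List.pairwise_flatMap.2 ⟨fun i _ => (hL i).1.pairwise_of_forall_ne fun a ha b hb hab => ?_,
    hns.imp fun ⟨hij, hR⟩ a ha b hb => ?_⟩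
  · rw [((hL i).2 a).1 ha, ((hL i).2 b).1 hb]
    exact ⟨hab, hR i⟩
  · rw [((hL _).2 a).1 ha, ((hL _).2 b).1 hb]
    exact ⟨by rintro rfl; exact hij (((hL _).2 a).1 ha ▸ ((hL _).2 a).1 hb), hR⟩

end RankLevels

theorem graded_rowmotion_eq_rank_toggles_general
    (P : Type*) [PartialOrder P] [Fintype P] (rk : P → ℕ) (r : ℕ)
    (hrkcov : ∀ x y : P, x ⋖ y → rk y = rk x + 1)
    (hrkmax : ∀ x : P, IsMax x → rk x = r)
    (L : ℕ → List P) (hL : ∀ i, (L i).Nodup ∧ ∀ x : P, x ∈ L i ↔ rk x = i) :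
    RowJ (P := P)
        = listComp ((List.range (r + 1)).map fun i => listComp ((L i).map togFun)) ∧
    RowA (P := P)
        = listComp ((List.range (r + 1)).reverse.map fun i =>
            listComp ((L i).map atogFun)) := by
  let _ : LocallyFiniteOrder P := Fintype.toLocallyFiniteOrder
  have levels : ∀ i x, x ∈ L i ↔ rk x = i := fun i => (hL i).2
  have hmono : StrictMono rk :=
    (strictMono_iff_forall_covBy rk).2 fun x y hxy => by rw [hrkcov x y hxy]; omega
  have hrank : ∀ x, rk x ∈ List.range (r + 1) := fun x => by
    obtain ⟨m, hxm, hm⟩ := exists_maximal_ge_of_wellFoundedGT (fun _ => True) x trivial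
    have : rk x ≤ r := (hmono.monotone hxm).trans_eq (hrkmax m fun _ h => hm.2 trivial h)
    exact List.mem_range.2 (by omega)
  refine ⟨?_, ?_⟩
  · rw [listComp_map_listComp,
      ← RowJ_eq_listComp_togFun _ fun x => (mem_flatMap_rankLevels levels).2 (hrank x)]
    exact (pairwise_flatMap_rankLevels (R := (· ≤ ·)) le_refl hL
      (List.pairwise_lt_range.imp fun h => ⟨h.ne, h.le⟩)).imp
      fun ⟨hne, hle⟩ hba => (hmono (hba.lt_of_ne hne.symm)).not_ge hle
  · rw [listComp_map_listComp, ← RowA_eq_listComp_atogFun _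
      fun x => (mem_flatMap_rankLevels levels).2 (List.mem_reverse.2 (hrank x))]
    exact (pairwise_flatMap_rankLevels (R := (· ≥ ·)) le_refl hL
      (List.pairwise_reverse.2 (List.pairwise_lt_range.imp fun h => ⟨h.ne', h.le⟩))).imp
      fun ⟨hne, hge⟩ hab => (hmono (hab.lt_of_ne hne)).not_ge hge

/-- For a finite graded poset of rank `r`, rowmotion on order ideals is
`t_{rk=0} ∘ t_{rk=1} ∘ ⋯ ∘ t_{rk=r}` and rowmotion on antichains is
`τ_{rk=r} ∘ ⋯ ∘ τ_{rk=1} ∘ τ_{rk=0}`, where the rank toggle for rank `i` is the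
composition of the toggles of all elements of rank `i` (in any order; `L i`
enumerates the elements of rank `i`). -/
theorem graded_rowmotion_eq_rank_toggles
    (P : Type*) [PartialOrder P] [Fintype P] (rk : P → ℕ) (r : ℕ)
    (hrk0 : ∀ x : P, IsMin x → rk x = 0)
    (hrkcov : ∀ x y : P, x ⋖ y → rk y = rk x + 1)
    (hrkmax : ∀ x : P, IsMax x → rk x = r)
    (L : ℕ → List P) (hL : ∀ i, (L i).Nodup ∧ ∀ x : P, x ∈ L i ↔ rk x = i) :
    RowJ (P := P)
        = listComp ((List.range (r + 1)).map fun i => listComp ((L i).map togFun)) ∧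
    RowA (P := P)
        = listComp ((List.range (r + 1)).reverse.map fun i =>
            listComp ((L i).map atogFun)) :=
  graded_rowmotion_eq_rank_toggles_general P rk r hrkcov hrkmax L hL
end
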